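/- arXiv:2309.15774 — 3 statements merged into one kernel-verified Lean document; each statement's English description precedes it below -/
import Mathlib

section
/- The set I of quaternions consisting of all quaternions whose coordinate vector (a,b,c,d) (for a + bi + cj + dk) is obtained by an even permutation of the four coordinates from one of the vectors (±1,0,0,0), (±1/2,±1/2,±1/2,±1/2), or (0,±1/2,±φ/2,±Φ/2) (all sign choices independent) has exactly 120 elements. -/
noncomputable section

open scoped Quaternion

/-- The little golden ratio. -/
def φ : ℝ := (Real.sqrt 5 - 1) / 2

/-- The big golden ratio. -/
def Φ : ℝ := (Real.sqrt 5 + 1) / 2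

/-- A real number is a sign if it is `1` or `-1`. -/
def IsSign (s : ℝ) : Prop := s = 1 ∨ s = -1

/-- The coordinate vector of a quaternion `a + bi + cj + dk`. -/
def coords (q : ℍ[ℝ]) : Fin 4 → ℝ := ![q.re, q.imI, q.imJ, q.imK]

/-- The base coordinate vectors `(±1,0,0,0)`, `(±1/2,±1/2,±1/2,±1/2)`, `(0,±1/2,±φ/2,±Φ/2)`. -/
def baseVectors : Set (Fin 4 → ℝ) :=
  {v | (∃ s, IsSign s ∧ v = ![s, 0, 0, 0]) ∨
       (∃ s₀ s₁ s₂ s₃, IsSign s₀ ∧ IsSign s₁ ∧ IsSign s₂ ∧ IsSign s₃ ∧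
          v = ![s₀ / 2, s₁ / 2, s₂ / 2, s₃ / 2]) ∨
       (∃ s₁ s₂ s₃, IsSign s₁ ∧ IsSign s₂ ∧ IsSign s₃ ∧
          v = ![0, s₁ / 2, s₂ * φ / 2, s₃ * Φ / 2])}

/-- The binary icosahedral group: quaternions whose coordinate vector is obtained from a base
vector by an even permutation of the four coordinates. -/
def binaryIcosahedral : Set ℍ[ℝ] :=
  {q | ∃ v ∈ baseVectors, ∃ σ : Equiv.Perm (Fin 4),
        σ ∈ alternatingGroup (Fin 4) ∧ coords q = v ∘ σ}

/-!
Every coordinate occurring here lies in `¼ ℤ[√5]`, because `φ = (√5 - 1)/2` and `Φ = (√5 + 1)/2`,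
and `ℤ[√5] → ℝ` is injective since `5` is not a square. So the set is in bijection with the
even-permutation closure of a finite set of vectors over `ℤ√5`, and counting is a finite
computation: `8` permutations of `(±1,0,0,0)`, the `16` vectors `(±½,±½,±½,±½)`, and `8 · 12 = 96`
from the third family, on which `A₄` acts freely because `0, ½, φ/2, Φ/2` are distinct.
-/

open Function Zsqrtd

section EvenPermClosure

variable {ι α β : Type*} [Fintype ι] [DecidableEq ι]

def evenPermClosure (B : Set (ι → α)) : Set (ι → α) :=
  {u | ∃ v ∈ B, ∃ σ ∈ alternatingGroup ι, u = v ∘ σ}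

lemma evenPermClosure_image (f : α → β) (B : Set (ι → α)) :
    evenPermClosure ((f ∘ ·) '' B) = (f ∘ ·) '' evenPermClosure B := by
  ext u
  simp only [evenPermClosure, Set.mem_image, Set.mem_ofPred_eq]
  constructor
  · rintro ⟨_, ⟨v, hv, rfl⟩, σ, hσ, rfl⟩
    exact ⟨v ∘ σ, ⟨v, hv, σ, hσ, rfl⟩, rfl⟩
  · rintro ⟨_, ⟨v, hv, σ, hσ, rfl⟩, rfl⟩
    exact ⟨f ∘ v, ⟨v, hv, rfl⟩, σ, hσ, rfl⟩

variable (ι) in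
def evenPerms : Finset (Equiv.Perm ι) :=
  Finset.univ.filter fun σ => Equiv.Perm.sign σ = 1

lemma evenPermClosure_coe_finset [DecidableEq α] (B : Finset (ι → α)) :
    evenPermClosure (B : Set (ι → α)) =
      Finset.image₂ (fun v (σ : Equiv.Perm ι) => v ∘ σ) B (evenPerms ι) := by
  ext u
  simp [evenPermClosure, evenPerms, Equiv.Perm.mem_alternatingGroup, eq_comm]

end EvenPermClosure

lemma binaryIcosahedral_eq_preimage :
    binaryIcosahedral = Quaternion.equivTuple ℝ ⁻¹' evenPermClosure baseVectors :=
  rfl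

def sqrtFive : {r : ℝ // r * r = 5} := ⟨√5, Real.mul_self_sqrt (by norm_num)⟩

lemma five_ne_mul_self (n : ℤ) : (5 : ℤ) ≠ n * n := by
  intro h
  have h₁ : n ≤ 2 := by nlinarith
  have h₂ : -2 ≤ n := by nlinarith
  interval_cases n <;> omega

def quarterReal (z : ℤ√5) : ℝ := lift sqrtFive z / 4

lemma quarterReal_injective : Injective quarterReal := fun _ _ h =>
  lift_injective sqrtFive five_ne_mul_self ((div_left_inj' four_ne_zero).mp h)

lemma quarterReal_mk (a b : ℤ) : quarterReal ⟨a, b⟩ = (a + b * √5) / 4 := rfl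

lemma quarterReal_zero : quarterReal 0 = 0 := by simp [quarterReal]

lemma quarterReal_four_mul (s : ℤ) : quarterReal ⟨4 * s, 0⟩ = s := by
  rw [quarterReal_mk]; push_cast; ring

lemma quarterReal_two_mul (s : ℤ) : quarterReal ⟨2 * s, 0⟩ = s / 2 := by
  rw [quarterReal_mk]; push_cast; ring

lemma quarterReal_φ (s : ℤ) : quarterReal ⟨-s, s⟩ = s * φ / 2 := by
  rw [quarterReal_mk, φ]; push_cast; ring

lemma quarterReal_Φ (s : ℤ) : quarterReal ⟨s, s⟩ = s * Φ / 2 := by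
  rw [quarterReal_mk, Φ]; ring

lemma quarterReal_comp (a b c d : ℤ√5) :
    quarterReal ∘ ![a, b, c, d] =
      ![quarterReal a, quarterReal b, quarterReal c, quarterReal d] := by
  funext i; fin_cases i <;> rfl

def signs : Finset ℤ := {1, -1}

lemma isSign_iff {r : ℝ} : IsSign r ↔ ∃ s ∈ signs, (s : ℝ) = r := by
  simp [IsSign, signs, eq_comm]

def baseVectorsInt : Finset (Fin 4 → ℤ√5) :=
  signs.image (fun s => ![⟨4 * s, 0⟩, 0, 0, 0]) ∪
  (signs ×ˢ signs ×ˢ signs ×ˢ signs).image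
    (fun s => ![⟨2 * s.1, 0⟩, ⟨2 * s.2.1, 0⟩, ⟨2 * s.2.2.1, 0⟩, ⟨2 * s.2.2.2, 0⟩]) ∪
  (signs ×ˢ signs ×ˢ signs).image
    (fun s => ![0, ⟨2 * s.1, 0⟩, ⟨-s.2.1, s.2.1⟩, ⟨s.2.2, s.2.2⟩])

lemma baseVectors_eq_image : baseVectors = (quarterReal ∘ ·) '' baseVectorsInt := by
  ext v
  simp only [baseVectors, isSign_iff, Set.mem_ofPred_eq, Set.mem_image, Finset.mem_coe]
  constructor
  · rintro (⟨_, ⟨s, hs, rfl⟩, rfl⟩ |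
      ⟨_, _, _, _, ⟨s₀, h₀, rfl⟩, ⟨s₁, h₁, rfl⟩, ⟨s₂, h₂, rfl⟩, ⟨s₃, h₃, rfl⟩, rfl⟩ |
      ⟨_, _, _, ⟨s₁, h₁, rfl⟩, ⟨s₂, h₂, rfl⟩, ⟨s₃, h₃, rfl⟩, rfl⟩)
    · exact ⟨_, Finset.mem_union_left _ (Finset.mem_union_left _ (Finset.mem_image_of_mem _ hs)),
        by rw [quarterReal_comp, quarterReal_four_mul, quarterReal_zero]⟩
    · refine ⟨_, Finset.mem_union_left _ (Finset.mem_union_right _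
        (Finset.mem_image_of_mem _ (s := _ ×ˢ _ ×ˢ _ ×ˢ _) (a := (s₀, s₁, s₂, s₃)) ?_)), ?_⟩
      · simp only [Finset.mem_product]; exact ⟨h₀, h₁, h₂, h₃⟩
      · simp only [quarterReal_comp, quarterReal_two_mul]
    · refine ⟨_, Finset.mem_union_right _
        (Finset.mem_image_of_mem _ (s := _ ×ˢ _ ×ˢ _) (a := (s₁, s₂, s₃)) ?_), ?_⟩
      · simp only [Finset.mem_product]; exact ⟨h₁, h₂, h₃⟩
      · simp only [quarterReal_comp, quarterReal_zero, quarterReal_two_mul, quarterReal_φ,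
          quarterReal_Φ]
  · rintro ⟨w, hw, rfl⟩
    simp only [baseVectorsInt, Finset.mem_union, Finset.mem_image, Finset.mem_product,
      Prod.exists] at hw
    rcases hw with (⟨s, hs, rfl⟩ | ⟨s₀, s₁, s₂, s₃, ⟨h₀, h₁, h₂, h₃⟩, rfl⟩) |
      ⟨s₁, s₂, s₃, ⟨h₁, h₂, h₃⟩, rfl⟩
    · exact Or.inl ⟨s, ⟨s, hs, rfl⟩,
        by rw [quarterReal_comp, quarterReal_four_mul, quarterReal_zero]⟩
    · exact Or.inr (Or.inl ⟨s₀, s₁, s₂, s₃, ⟨s₀, h₀, rfl⟩, ⟨s₁, h₁, rfl⟩, ⟨s₂, h₂, rfl⟩,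
        ⟨s₃, h₃, rfl⟩, by simp only [quarterReal_comp, quarterReal_two_mul]⟩)
    · exact Or.inr (Or.inr ⟨s₁, s₂, s₃, ⟨s₁, h₁, rfl⟩, ⟨s₂, h₂, rfl⟩, ⟨s₃, h₃, rfl⟩,
        by simp only [quarterReal_comp, quarterReal_zero, quarterReal_two_mul, quarterReal_φ,
          quarterReal_Φ]⟩)

set_option maxRecDepth 4000 in
lemma card_evenPermClosure_baseVectorsInt :
    (Finset.image₂ (fun v (σ : Equiv.Perm (Fin 4)) => v ∘ σ) baseVectorsInt
      (evenPerms (Fin 4))).card = 120 := by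
  decide

theorem stmt0 : Set.ncard binaryIcosahedral = 120 := by
  rw [binaryIcosahedral_eq_preimage,
    Set.ncard_preimage_of_injective_subset_range (Equiv.injective _) (by simp),
    baseVectors_eq_image, evenPermClosure_image,
    Set.ncard_image_of_injective _ quarterReal_injective.comp_left,
    evenPermClosure_coe_finset, Set.ncard_coe_finset, card_evenPermClosure_baseVectorsInt]
end
end

section
/- The golden ratio Φ = (√5 + 1)/2, regarded as a real quaternion, is an icosian; consequently the icosian ring 𝕀 is closed under multiplication by Φ and by φ = Φ − 1, and in particular φ·q ∈ 𝕀 for every q ∈ I. -/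
noncomputable section

open scoped Quaternion

/-- The icosian ring: the additive subgroup of the quaternions generated by the binary
icosahedral group. -/
def icosians : AddSubgroup ℍ[ℝ] := AddSubgroup.closure binaryIcosahedral


/-!
Multiplication by `φ` is additive, so it suffices to show `φ * q ∈ 𝕀` for `q ∈ I`. In coordinates
`φ * q` is `φ • (v ∘ σ) = (φ • v) ∘ σ` for a base vector `v` and an even permutation `σ`, and
precomposing with even permutations preserves the lattice spanned by the coordinate vectors of
`I`. So it suffices to write `φ • v` as a signed sum of evenly permuted base vectors, which for
each of the three kinds of base vector follows from `Φ = φ + 1` and `φ² = 1 - φ`. Then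
`Φ * q = φ * q + q`, and `Φ = Φ * 1` with `1 ∈ I`.
-/

lemma Φ_eq_φ_add_one : Φ = φ + 1 := by unfold φ Φ; ring

lemma φ_sq : φ ^ 2 = 1 - φ := by
  unfold φ; linear_combination (1 / 4 : ℝ) * Real.sq_sqrt (show (0 : ℝ) ≤ 5 by norm_num)

lemma IsSign.neg {s : ℝ} (hs : IsSign s) : IsSign (-s) := by
  rcases hs with rfl | rfl <;> norm_num [IsSign]

def icosianVectors : Set (Fin 4 → ℝ) :=
  {w | ∃ v ∈ baseVectors, ∃ σ ∈ alternatingGroup (Fin 4), w = v ∘ σ}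

def icosianLattice : AddSubgroup (Fin 4 → ℝ) := AddSubgroup.closure icosianVectors

lemma mem_icosianLattice_of_eq_comp {v w : Fin 4 → ℝ} (hv : v ∈ baseVectors)
    {σ : Equiv.Perm (Fin 4)} (hσ : σ ∈ alternatingGroup (Fin 4)) (hw : w = v ∘ σ) :
    w ∈ icosianLattice :=
  AddSubgroup.subset_closure ⟨v, hv, σ, hσ, hw⟩

lemma mem_icosianLattice_of_mem_baseVectors {v : Fin 4 → ℝ} (hv : v ∈ baseVectors) :
    v ∈ icosianLattice :=
  mem_icosianLattice_of_eq_comp hv (one_mem _) rfl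

lemma comp_mem_icosianLattice {w : Fin 4 → ℝ} (hw : w ∈ icosianLattice)
    {σ : Equiv.Perm (Fin 4)} (hσ : σ ∈ alternatingGroup (Fin 4)) : w ∘ σ ∈ icosianLattice := by
  induction hw using AddSubgroup.closure_induction with
  | mem w hw =>
    obtain ⟨v, hv, τ, hτ, rfl⟩ := hw
    exact mem_icosianLattice_of_eq_comp hv (mul_mem hτ hσ) rfl
  | zero => exact zero_mem _
  | add u w _ _ hu hw => exact add_mem hu hw
  | neg w _ hw => exact neg_mem hw

lemma revPerm_mem_alternatingGroup : Fin.revPerm ∈ alternatingGroup (Fin 4) := by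
  rw [Equiv.Perm.mem_alternatingGroup]; decide

lemma φ_smul_unit_mem_icosianLattice {s : ℝ} (hs : IsSign s) :
    φ • ![s, 0, 0, 0] ∈ icosianLattice := by
  have h₁ : ![s * Φ / 2, s * φ / 2, s / 2, 0] ∈ icosianLattice :=
    mem_icosianLattice_of_eq_comp (Or.inr (Or.inr ⟨s, s, s, hs, hs, hs, rfl⟩))
      revPerm_mem_alternatingGroup (by funext i; fin_cases i <;> rfl)
  have h₂ : ![s * Φ / 2, -s * φ / 2, -s / 2, 0] ∈ icosianLattice :=
    mem_icosianLattice_of_eq_comp (Or.inr (Or.inr ⟨-s, -s, s, hs.neg, hs.neg, hs, rfl⟩))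
      revPerm_mem_alternatingGroup (by funext i; fin_cases i <;> rfl)
  have h₃ : ![s, 0, 0, 0] ∈ icosianLattice :=
    mem_icosianLattice_of_mem_baseVectors (Or.inl ⟨s, hs, rfl⟩)
  have hdecomp : φ • ![s, 0, 0, 0] =
      ![s * Φ / 2, s * φ / 2, s / 2, 0] + ![s * Φ / 2, -s * φ / 2, -s / 2, 0] - ![s, 0, 0, 0] := by
    simp only [Matrix.smul_cons, Matrix.cons_add_cons, Matrix.cons_sub_cons, Matrix.smul_empty,
      Matrix.empty_add_empty, Matrix.empty_sub_empty, smul_eq_mul]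
    grind [Φ_eq_φ_add_one]
  rw [hdecomp]
  exact sub_mem (add_mem h₁ h₂) h₃

lemma φ_smul_half_mem_icosianLattice {s₀ s₁ s₂ s₃ : ℝ} (hs₀ : IsSign s₀) (hs₁ : IsSign s₁)
    (hs₂ : IsSign s₂) (hs₃ : IsSign s₃) :
    φ • ![s₀ / 2, s₁ / 2, s₂ / 2, s₃ / 2] ∈ icosianLattice := by
  have h₁ : ![0, s₁ * Φ / 2, s₂ / 2, s₃ * φ / 2] ∈ icosianLattice :=
    mem_icosianLattice_of_eq_comp (Or.inr (Or.inr ⟨s₂, s₃, s₁, hs₂, hs₃, hs₁, rfl⟩))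
      (σ := c[1, 3, 2]) (by rw [Equiv.Perm.mem_alternatingGroup]; decide)
      (by funext i; fin_cases i <;> rfl)
  have h₂ : ![s₀ * Φ / 2, 0, s₂ * φ / 2, s₃ / 2] ∈ icosianLattice :=
    mem_icosianLattice_of_eq_comp (Or.inr (Or.inr ⟨s₃, s₂, s₀, hs₃, hs₂, hs₀, rfl⟩))
      (σ := c[0, 3, 1]) (by rw [Equiv.Perm.mem_alternatingGroup]; decide)
      (by funext i; fin_cases i <;> rfl)
  have h₃ : ![s₀ / 2, s₁ / 2, s₂ / 2, s₃ / 2] ∈ icosianLattice :=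
    mem_icosianLattice_of_mem_baseVectors
      (Or.inr (Or.inl ⟨s₀, s₁, s₂, s₃, hs₀, hs₁, hs₂, hs₃, rfl⟩))
  have hdecomp : φ • ![s₀ / 2, s₁ / 2, s₂ / 2, s₃ / 2] =
      ![0, s₁ * Φ / 2, s₂ / 2, s₃ * φ / 2] + ![s₀ * Φ / 2, 0, s₂ * φ / 2, s₃ / 2] -
        ![s₀ / 2, s₁ / 2, s₂ / 2, s₃ / 2] := by
    simp only [Matrix.smul_cons, Matrix.cons_add_cons, Matrix.cons_sub_cons, Matrix.smul_empty,
      Matrix.empty_add_empty, Matrix.empty_sub_empty, smul_eq_mul]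
    grind [Φ_eq_φ_add_one]
  rw [hdecomp]
  exact sub_mem (add_mem h₁ h₂) h₃

lemma φ_smul_golden_mem_icosianLattice {s₁ s₂ s₃ : ℝ} (hs₁ : IsSign s₁) (hs₂ : IsSign s₂)
    (hs₃ : IsSign s₃) : φ • ![0, s₁ / 2, s₂ * φ / 2, s₃ * Φ / 2] ∈ icosianLattice := by
  have h₁ : ![0, 0, s₂, 0] ∈ icosianLattice :=
    mem_icosianLattice_of_eq_comp (Or.inl ⟨s₂, hs₂, rfl⟩)
      (σ := c[0, 1, 2]) (by rw [Equiv.Perm.mem_alternatingGroup]; decide)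
      (by funext i; fin_cases i <;> rfl)
  have h₂ : ![0, s₁ * φ / 2, -s₂ * Φ / 2, s₃ / 2] ∈ icosianLattice :=
    mem_icosianLattice_of_eq_comp (Or.inr (Or.inr ⟨s₃, s₁, -s₂, hs₃, hs₁, hs₂.neg, rfl⟩))
      (σ := c[1, 2, 3]) (by rw [Equiv.Perm.mem_alternatingGroup]; decide)
      (by funext i; fin_cases i <;> rfl)
  have hdecomp : φ • ![0, s₁ / 2, s₂ * φ / 2, s₃ * Φ / 2] =
      ![0, 0, s₂, 0] + ![0, s₁ * φ / 2, -s₂ * Φ / 2, s₃ / 2] := by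
    simp only [Matrix.smul_cons, Matrix.cons_add_cons, Matrix.smul_empty, Matrix.empty_add_empty,
      smul_eq_mul]
    grind [Φ_eq_φ_add_one, φ_sq]
  rw [hdecomp]
  exact add_mem h₁ h₂

lemma φ_smul_mem_icosianLattice {v : Fin 4 → ℝ} (hv : v ∈ baseVectors) :
    φ • v ∈ icosianLattice := by
  rcases hv with ⟨s, hs, rfl⟩ | ⟨s₀, s₁, s₂, s₃, hs₀, hs₁, hs₂, hs₃, rfl⟩ |
    ⟨s₁, s₂, s₃, hs₁, hs₂, hs₃, rfl⟩
  · exact φ_smul_unit_mem_icosianLattice hs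
  · exact φ_smul_half_mem_icosianLattice hs₀ hs₁ hs₂ hs₃
  · exact φ_smul_golden_mem_icosianLattice hs₁ hs₂ hs₃

lemma coords_coe_mul (r : ℝ) (q : ℍ[ℝ]) : coords ((r : ℍ[ℝ]) * q) = r • coords q := by
  ext i; fin_cases i <;> simp [coords]

lemma mem_icosians_of_coords_mem {q : ℍ[ℝ]} (hq : coords q ∈ icosianLattice) :
    q ∈ icosians := by
  let e := QuaternionAlgebra.linearEquivTuple (-1 : ℝ) 0 (-1)
  have hle : icosianLattice ≤ icosians.comap e.symm.toLinearMap.toAddMonoidHom := by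
    refine (AddSubgroup.closure_le _).2 fun w hw => AddSubgroup.subset_closure ?_
    obtain ⟨v, hv, σ, hσ, rfl⟩ := hw
    exact ⟨v, hv, σ, hσ, e.apply_symm_apply _⟩
  exact e.symm_apply_apply q ▸ hle hq

lemma φ_mul_mem_icosians_of_mem_binaryIcosahedral {q : ℍ[ℝ]} (hq : q ∈ binaryIcosahedral) :
    ((φ : ℝ) : ℍ[ℝ]) * q ∈ icosians := by
  obtain ⟨v, hv, σ, hσ, hcoords⟩ := hq
  apply mem_icosians_of_coords_mem
  rw [coords_coe_mul, hcoords]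
  exact comp_mem_icosianLattice (φ_smul_mem_icosianLattice hv) hσ

lemma φ_mul_mem_icosians {q : ℍ[ℝ]} (hq : q ∈ icosians) : ((φ : ℝ) : ℍ[ℝ]) * q ∈ icosians :=
  (AddSubgroup.closure_le (icosians.comap (AddMonoidHom.mulLeft ((φ : ℝ) : ℍ[ℝ])))).2
    (fun _ => φ_mul_mem_icosians_of_mem_binaryIcosahedral) hq

lemma Φ_mul_mem_icosians {q : ℍ[ℝ]} (hq : q ∈ icosians) : ((Φ : ℝ) : ℍ[ℝ]) * q ∈ icosians := by
  rw [Φ_eq_φ_add_one, Quaternion.coe_add, Quaternion.coe_one, add_one_mul]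
  exact add_mem (φ_mul_mem_icosians hq) hq

lemma one_mem_binaryIcosahedral : (1 : ℍ[ℝ]) ∈ binaryIcosahedral :=
  ⟨![1, 0, 0, 0], Or.inl ⟨1, Or.inl rfl, rfl⟩, 1, one_mem _, by
    funext i; fin_cases i <;> simp [coords]⟩

theorem stmt5 :
    ((Φ : ℝ) : ℍ[ℝ]) ∈ icosians ∧
    (∀ q ∈ icosians, ((Φ : ℝ) : ℍ[ℝ]) * q ∈ icosians) ∧
    (∀ q ∈ icosians, ((φ : ℝ) : ℍ[ℝ]) * q ∈ icosians) ∧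
    (∀ q ∈ binaryIcosahedral, ((φ : ℝ) : ℍ[ℝ]) * q ∈ icosians) := by
  refine ⟨?_, fun _ => Φ_mul_mem_icosians, fun _ => φ_mul_mem_icosians,
    fun _ => φ_mul_mem_icosians_of_mem_binaryIcosahedral⟩
  simpa using Φ_mul_mem_icosians (AddSubgroup.subset_closure one_mem_binaryIcosahedral)
end
end

section
/- There exists an isomorphism of additive groups g from the group 𝕀₀ of pure imaginary icosians onto the D₆ lattice L₆ ⊂ ℝ⁶ such that for every q ∈ 𝕀₀ the Euclidean norm satisfies ‖g(q)‖² = 2·|q|², where |q|² is the Conway–Sloane norm. In other words, the pure imaginary icosians equipped with the Conway–Soane norm are isometric to a rescaled copy of the D₆ lattice. -/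
noncomputable section

open scoped Quaternion

/-- The squared quaternionic norm `a² + b² + c² + d²`. -/
def nsq (q : ℍ[ℝ]) : ℝ := q.re ^ 2 + q.imI ^ 2 + q.imJ ^ 2 + q.imK ^ 2

/-- The Conway–Sloane norm of an icosian: writing its quaternionic norm `‖q‖²` as `x + y√5`
with `x, y` rational, the Conway–Sloane norm is `|q|² = x + y`. -/
def csNorm (q : ℍ[ℝ]) : ℚ := by
  classical
  exact if h : ∃ p : ℚ × ℚ, nsq q = (p.1 : ℝ) + (p.2 : ℝ) * Real.sqrt 5
    then h.choose.1 + h.choose.2 else 0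

/-- The pure imaginary icosians. -/
def pureIcosians : Set ℍ[ℝ] := {q | q ∈ icosians ∧ q.re = 0}

/-- The `D₆` lattice in `ℝ⁶`. -/
def D6 : Set (Fin 6 → ℝ) :=
  {x | (∀ i, ∃ n : ℤ, x i = n) ∧ ∃ m : ℤ, ∑ i, x i = 2 * m}

/-!
Every icosian has coordinates `(xᵢ + yᵢ√5)/4` with integers `xᵢ, yᵢ` satisfying a few congruences
mod 2 and 4, which hold on the generators and are stable under addition. For a pure quaternion
with coordinates `aᵢ + bᵢ√5` (`aᵢ, bᵢ ∈ ℚ`) the map `g` is a ℚ-linear, injective function of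
`(a, b)` with `‖g q‖² = 2|q|²`, and on pure icosians the congruences make `g q` an integer vector
with even coordinate sum. Conversely `g(𝕀₀)` is a group containing the simple roots
`eᵢ - eᵢ₊₁`, `e₄ + e₅` of `D₆` (images of `i`, `j`, `k`, of one generator and of two sums of two
generators), and these generate `D₆`.
-/

lemma irrational_sqrt_five : Irrational √5 := by
  simpa using Nat.prime_five.irrational_sqrt

lemma rat_add_rat_mul_sqrt_five_inj {a b c d : ℚ} (h : (a : ℝ) + b * √5 = c + d * √5) :
    a = c ∧ b = d := by
  obtain rfl | hbd := eq_or_ne b d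
  · exact ⟨by exact_mod_cast add_right_cancel h, rfl⟩
  · refine absurd ⟨(a - c) / (d - b), ?_⟩ irrational_sqrt_five
    have hdb : (d : ℝ) - b ≠ 0 := sub_ne_zero.mpr (by exact_mod_cast hbd.symm)
    push_cast
    rw [div_eq_iff hdb]
    linarith

/-- `a + b√5 ↦ (a, b)`, with junk value `(0, 0)` off `ℚ(√5)`. -/
def sqrt5Coords (r : ℝ) : ℚ × ℚ := by
  classical
  exact if h : ∃ p : ℚ × ℚ, r = (p.1 : ℝ) + (p.2 : ℝ) * √5 then h.choose else 0

lemma sqrt5Coords_eq (a b : ℚ) : sqrt5Coords (a + b * √5) = (a, b) := by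
  have h : ∃ p : ℚ × ℚ, (a : ℝ) + b * √5 = p.1 + p.2 * √5 := ⟨(a, b), rfl⟩
  rw [sqrt5Coords, dif_pos h]
  obtain ⟨h₁, h₂⟩ := rat_add_rat_mul_sqrt_five_inj h.choose_spec.symm
  exact Prod.ext h₁ h₂

lemma csNorm_eq_sqrt5Coords (q : ℍ[ℝ]) :
    csNorm q = (sqrt5Coords (nsq q)).1 + (sqrt5Coords (nsq q)).2 := by
  unfold csNorm sqrt5Coords
  split_ifs <;> simp

lemma coords_injective : Function.Injective coords := by
  intro p q h
  ext
  exacts [congrFun h 0, congrFun h 1, congrFun h 2, congrFun h 3]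

lemma coords_add (p q : ℍ[ℝ]) : coords (p + q) = coords p + coords q := by
  funext i; fin_cases i <;> rfl

lemma coords_neg (q : ℍ[ℝ]) : coords (-q) = -coords q := by
  funext i; fin_cases i <;> rfl

lemma nsq_eq_sum_coords (q : ℍ[ℝ]) : nsq q = ∑ i, coords q i ^ 2 := by
  simp [nsq, coords, Fin.sum_univ_four]

lemma csNorm_of_coords {q : ℍ[ℝ]} {a b : Fin 4 → ℚ} (h : coords q = fun i => a i + b i * √5) :
    csNorm q = ∑ i, (a i ^ 2 + 2 * a i * b i + 5 * b i ^ 2) := by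
  have h5 : √5 ^ 2 = 5 := Real.sq_sqrt (by norm_num)
  have hn : nsq q =
      ((∑ i, (a i ^ 2 + 5 * b i ^ 2) : ℚ) : ℝ) + ((∑ i, 2 * a i * b i : ℚ) : ℝ) * √5 := by
    rw [nsq_eq_sum_coords, h]
    push_cast
    simp only [Finset.sum_mul, ← Finset.sum_add_distrib]
    refine Finset.sum_congr rfl fun i _ => ?_
    linear_combination (b i : ℝ) ^ 2 * h5
  rw [csNorm_eq_sqrt5Coords, hn, sqrt5Coords_eq, ← Finset.sum_add_distrib]
  exact Finset.sum_congr rfl fun i _ => by ring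

/-- Writing the coordinates of a pure quaternion as `aᵢ + bᵢ√5`, its Conway–Sloane norm is
`∑ ((aᵢ + bᵢ)² + (2bᵢ)²)`; the vector pairs each `aᵢ + bᵢ` with `2bᵢ₋₁` (indices mod 3) through
`(u + v)² + (u - v)² = 2(u² + v²)`. -/
def d6Vec (a b : Fin 4 → ℚ) : Fin 6 → ℚ :=
  ![a 1 + b 1 + 2 * b 3, -(a 1 + b 1) + 2 * b 3,
    a 2 + b 2 + 2 * b 1, -(a 2 + b 2) + 2 * b 1,
    a 3 + b 3 - 2 * b 2, -(a 3 + b 3) - 2 * b 2]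

lemma d6Vec_add (a b a' b' : Fin 4 → ℚ) : d6Vec (a + a') (b + b') = d6Vec a b + d6Vec a' b' := by
  funext k
  fin_cases k <;> simp only [d6Vec, Fin.zero_eta, Fin.mk_one, Fin.reduceFinMk,
    Pi.add_apply, Matrix.cons_val_zero, Matrix.cons_val_one, Matrix.cons_val] <;> ring

lemma d6Vec_inj {a b a' b' : Fin 4 → ℚ} (h : d6Vec a b = d6Vec a' b') (ha : a 0 = a' 0)
    (hb : b 0 = b' 0) : a = a' ∧ b = b' := by
  have h0 := congrFun h 0; have h1 := congrFun h 1; have h2 := congrFun h 2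
  have h3 := congrFun h 3; have h4 := congrFun h 4; have h5 := congrFun h 5
  simp only [d6Vec, Matrix.cons_val_zero, Matrix.cons_val_one, Matrix.cons_val]
    at h0 h1 h2 h3 h4 h5
  constructor <;> funext i <;> fin_cases i <;> simp only [Fin.zero_eta, Fin.mk_one,
    Fin.reduceFinMk] <;> linarith

lemma sum_sq_d6Vec {a b : Fin 4 → ℚ} (ha : a 0 = 0) (hb : b 0 = 0) :
    ∑ k, d6Vec a b k ^ 2 = 2 * ∑ i, (a i ^ 2 + 2 * a i * b i + 5 * b i ^ 2) := by
  simp only [d6Vec, Fin.sum_univ_six, Fin.sum_univ_four, Matrix.cons_val_zero,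
    Matrix.cons_val_one, Matrix.cons_val, ha, hb]
  ring

/-- The isometry `g`. -/
def toD6 (q : ℍ[ℝ]) : Fin 6 → ℝ :=
  fun k => d6Vec (fun i => (sqrt5Coords (coords q i)).1) (fun i => (sqrt5Coords (coords q i)).2) k

lemma toD6_of_coords {q : ℍ[ℝ]} {a b : Fin 4 → ℚ} (h : coords q = fun i => a i + b i * √5) :
    toD6 q = fun k => (d6Vec a b k : ℝ) := by
  unfold toD6
  simp only [h, sqrt5Coords_eq]

/-- Congruences on the quaternion with coordinates `(xᵢ + yᵢ√5)/4`. -/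
def IcosianCongr (x y : Fin 4 → ℤ) : Prop :=
  2 ∣ x 0 + y 0 ∧ 2 ∣ x 1 + y 1 ∧ 2 ∣ x 2 + y 2 ∧ 2 ∣ x 3 + y 3 ∧
  2 ∣ x 0 + x 1 + x 2 + x 3 ∧
  4 ∣ 2 * y 1 + x 2 + 3 * y 2 + x 3 + y 3 ∧
  4 ∣ x 1 + y 1 + 2 * y 2 + x 3 + 3 * y 3 ∧
  4 ∣ x 0 + y 0 + x 2 + 3 * y 2 + 2 * y 3

lemma IcosianCongr.add {x y x' y' : Fin 4 → ℤ} (h : IcosianCongr x y) (h' : IcosianCongr x' y') :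
    IcosianCongr (x + x') (y + y') := by
  simp only [IcosianCongr, Pi.add_apply] at *
  omega

lemma IcosianCongr.neg {x y : Fin 4 → ℤ} (h : IcosianCongr x y) : IcosianCongr (-x) (-y) := by
  simp only [IcosianCongr, Pi.neg_apply] at *
  omega

lemma icosianCongr_comp_of_dvd {x : Fin 4 → ℤ} (h₂ : ∀ i, 2 ∣ x i) (h₄ : ∀ i j, 4 ∣ x i - x j)
    (σ : Equiv.Perm (Fin 4)) : IcosianCongr (x ∘ σ) 0 := by
  have := h₂ (σ 0); have := h₂ (σ 1); have := h₂ (σ 2); have := h₂ (σ 3)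
  have := h₄ (σ 0) (σ 1); have := h₄ (σ 0) (σ 2); have := h₄ (σ 0) (σ 3)
  simp only [IcosianCongr, Function.comp_apply, Pi.zero_apply]
  omega

lemma Equiv.Perm.cases_of_mem_alternatingGroup_fin_four {σ : Equiv.Perm (Fin 4)}
    (hσ : σ ∈ alternatingGroup (Fin 4)) :
    (σ 0 = 0 ∧ σ 1 = 1 ∧ σ 2 = 2 ∧ σ 3 = 3) ∨ (σ 0 = 0 ∧ σ 1 = 2 ∧ σ 2 = 3 ∧ σ 3 = 1) ∨
    (σ 0 = 0 ∧ σ 1 = 3 ∧ σ 2 = 1 ∧ σ 3 = 2) ∨ (σ 0 = 1 ∧ σ 1 = 0 ∧ σ 2 = 3 ∧ σ 3 = 2) ∨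
    (σ 0 = 1 ∧ σ 1 = 2 ∧ σ 2 = 0 ∧ σ 3 = 3) ∨ (σ 0 = 1 ∧ σ 1 = 3 ∧ σ 2 = 2 ∧ σ 3 = 0) ∨
    (σ 0 = 2 ∧ σ 1 = 0 ∧ σ 2 = 1 ∧ σ 3 = 3) ∨ (σ 0 = 2 ∧ σ 1 = 1 ∧ σ 2 = 3 ∧ σ 3 = 0) ∨
    (σ 0 = 2 ∧ σ 1 = 3 ∧ σ 2 = 0 ∧ σ 3 = 1) ∨ (σ 0 = 3 ∧ σ 1 = 0 ∧ σ 2 = 2 ∧ σ 3 = 1) ∨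
    (σ 0 = 3 ∧ σ 1 = 1 ∧ σ 2 = 0 ∧ σ 3 = 2) ∨ (σ 0 = 3 ∧ σ 1 = 2 ∧ σ 2 = 1 ∧ σ 3 = 0) := by
  revert σ
  simp only [Equiv.Perm.mem_alternatingGroup]
  decide

lemma icosianCongr_comp_golden {t₁ t₂ t₃ : ℤ} (h₁ : t₁ = 1 ∨ t₁ = -1) (h₂ : t₂ = 1 ∨ t₂ = -1)
    (h₃ : t₃ = 1 ∨ t₃ = -1) {σ : Equiv.Perm (Fin 4)} (hσ : σ ∈ alternatingGroup (Fin 4)) :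
    IcosianCongr (![0, 2 * t₁, -t₂, t₃] ∘ σ) (![0, 0, t₂, t₃] ∘ σ) := by
  rcases Equiv.Perm.cases_of_mem_alternatingGroup_fin_four hσ with
    ⟨e₀, e₁, e₂, e₃⟩ | ⟨e₀, e₁, e₂, e₃⟩ | ⟨e₀, e₁, e₂, e₃⟩ | ⟨e₀, e₁, e₂, e₃⟩ | ⟨e₀, e₁, e₂, e₃⟩ |
    ⟨e₀, e₁, e₂, e₃⟩ | ⟨e₀, e₁, e₂, e₃⟩ | ⟨e₀, e₁, e₂, e₃⟩ | ⟨e₀, e₁, e₂, e₃⟩ | ⟨e₀, e₁, e₂, e₃⟩ |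
    ⟨e₀, e₁, e₂, e₃⟩ | ⟨e₀, e₁, e₂, e₃⟩ <;>
  simp only [IcosianCongr, Function.comp_apply, e₀, e₁, e₂, e₃, Matrix.cons_val_zero,
    Matrix.cons_val_one, Matrix.cons_val_two, Matrix.cons_val_three, Matrix.head_cons,
    Matrix.tail_cons] <;>
  omega

lemma IsSign.exists_int {s : ℝ} (hs : IsSign s) : ∃ t : ℤ, (t = 1 ∨ t = -1) ∧ s = t := by
  rcases hs with rfl | rfl
  exacts [⟨1, Or.inl rfl, by norm_num⟩, ⟨-1, Or.inr rfl, by norm_num⟩]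

lemma exists_icosianCongr_of_mem_baseVectors {v : Fin 4 → ℝ} (hv : v ∈ baseVectors) :
    ∃ x y : Fin 4 → ℤ, (∀ σ ∈ alternatingGroup (Fin 4), IcosianCongr (x ∘ σ) (y ∘ σ)) ∧
      v = fun i => (x i + y i * √5) / 4 := by
  rcases hv with ⟨s, hs, rfl⟩ | ⟨s₀, s₁, s₂, s₃, hs₀, hs₁, hs₂, hs₃, rfl⟩ |
    ⟨s₁, s₂, s₃, hs₁, hs₂, hs₃, rfl⟩
  · obtain ⟨t, -, rfl⟩ := hs.exists_int
    refine ⟨![4 * t, 0, 0, 0], 0, fun σ _ => icosianCongr_comp_of_dvd ?_ ?_ σ, ?_⟩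
    · intro i
      fin_cases i <;> simp only [Fin.zero_eta, Fin.mk_one, Fin.reduceFinMk,
        Matrix.cons_val_zero, Matrix.cons_val_one, Matrix.cons_val] <;> omega
    · intro i j
      fin_cases i <;> fin_cases j <;> simp only [Fin.zero_eta, Fin.mk_one, Fin.reduceFinMk,
        Matrix.cons_val_zero, Matrix.cons_val_one, Matrix.cons_val] <;> omega
    · funext i; fin_cases i <;> simp
  · obtain ⟨t₀, ht₀, rfl⟩ := hs₀.exists_int
    obtain ⟨t₁, ht₁, rfl⟩ := hs₁.exists_int
    obtain ⟨t₂, ht₂, rfl⟩ := hs₂.exists_int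
    obtain ⟨t₃, ht₃, rfl⟩ := hs₃.exists_int
    refine ⟨![2 * t₀, 2 * t₁, 2 * t₂, 2 * t₃], 0, fun σ _ => icosianCongr_comp_of_dvd ?_ ?_ σ, ?_⟩
    · intro i
      fin_cases i <;> simp only [Fin.zero_eta, Fin.mk_one, Fin.reduceFinMk,
        Matrix.cons_val_zero, Matrix.cons_val_one, Matrix.cons_val] <;> omega
    · intro i j
      fin_cases i <;> fin_cases j <;> simp only [Fin.zero_eta, Fin.mk_one, Fin.reduceFinMk,
        Matrix.cons_val_zero, Matrix.cons_val_one, Matrix.cons_val] <;> omega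
    · funext i
      fin_cases i <;> simp only [Fin.zero_eta, Fin.mk_one, Fin.reduceFinMk,
        Matrix.cons_val_zero, Matrix.cons_val_one, Matrix.cons_val, Pi.zero_apply, Int.cast_mul,
        Int.cast_ofNat, Int.cast_zero] <;> ring
  · obtain ⟨t₁, ht₁, rfl⟩ := hs₁.exists_int
    obtain ⟨t₂, ht₂, rfl⟩ := hs₂.exists_int
    obtain ⟨t₃, ht₃, rfl⟩ := hs₃.exists_int
    refine ⟨![0, 2 * t₁, -t₂, t₃], ![0, 0, t₂, t₃],
      fun σ hσ => icosianCongr_comp_golden ht₁ ht₂ ht₃ hσ, ?_⟩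
    funext i
    fin_cases i <;> simp only [φ, Φ, Fin.zero_eta, Fin.mk_one, Fin.reduceFinMk,
      Matrix.cons_val_zero, Matrix.cons_val_one, Matrix.cons_val, Int.cast_mul, Int.cast_ofNat,
      Int.cast_zero, Int.cast_neg] <;> ring

def congrLattice : AddSubgroup ℍ[ℝ] where
  carrier := {q | ∃ x y, IcosianCongr x y ∧ coords q = fun i => (x i + y i * √5) / 4}
  add_mem' := by
    rintro p q ⟨x, y, hxy, hp⟩ ⟨x', y', hxy', hq⟩
    refine ⟨x + x', y + y', hxy.add hxy', ?_⟩
    rw [coords_add, hp, hq]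
    funext i
    simp only [Pi.add_apply, Int.cast_add]
    ring
  zero_mem' := ⟨0, 0, by simp [IcosianCongr], by funext i; fin_cases i <;> simp [coords]⟩
  neg_mem' := by
    rintro q ⟨x, y, hxy, hq⟩
    refine ⟨-x, -y, hxy.neg, ?_⟩
    rw [coords_neg, hq]
    funext i
    simp only [Pi.neg_apply, Int.cast_neg]
    ring

lemma binaryIcosahedral_subset_congrLattice : binaryIcosahedral ⊆ congrLattice := by
  rintro q ⟨v, hv, σ, hσ, hq⟩
  obtain ⟨x, y, hxy, rfl⟩ := exists_icosianCongr_of_mem_baseVectors hv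
  exact ⟨x ∘ σ, y ∘ σ, hxy σ hσ, hq⟩

lemma icosians_le_congrLattice : icosians ≤ congrLattice :=
  (AddSubgroup.closure_le _).mpr binaryIcosahedral_subset_congrLattice

lemma exists_icosianCongr_of_mem_pureIcosians {q : ℍ[ℝ]} (hq : q ∈ pureIcosians) :
    ∃ x y : Fin 4 → ℤ, IcosianCongr x y ∧ x 0 = 0 ∧ y 0 = 0 ∧
      coords q = fun i => ((x i / 4 : ℚ) : ℝ) + ((y i / 4 : ℚ) : ℝ) * √5 := by
  obtain ⟨x, y, hxy, hcoords⟩ := icosians_le_congrLattice hq.1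
  have hcoords' : coords q = fun i => ((x i / 4 : ℚ) : ℝ) + ((y i / 4 : ℚ) : ℝ) * √5 := by
    rw [hcoords]
    funext i
    push_cast
    ring
  have hre :
      ((x 0 / 4 : ℚ) : ℝ) + ((y 0 / 4 : ℚ) : ℝ) * √5 = ((0 : ℚ) : ℝ) + ((0 : ℚ) : ℝ) * √5 := by
    rw [← congrFun hcoords' 0]
    simpa [coords] using hq.2
  obtain ⟨hx, hy⟩ := rat_add_rat_mul_sqrt_five_inj hre
  exact ⟨x, y, hxy, by simpa using hx, by simpa using hy, hcoords'⟩

lemma exists_sqrt5_coords_of_mem_pureIcosians {q : ℍ[ℝ]} (hq : q ∈ pureIcosians) :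
    ∃ a b : Fin 4 → ℚ, a 0 = 0 ∧ b 0 = 0 ∧ coords q = fun i => a i + b i * √5 := by
  obtain ⟨x, y, -, hx, hy, hq⟩ := exists_icosianCongr_of_mem_pureIcosians hq
  exact ⟨fun i => x i / 4, fun i => y i / 4, by simp [hx], by simp [hy], hq⟩

lemma toD6_add_of_mem_pureIcosians {p q : ℍ[ℝ]} (hp : p ∈ pureIcosians) (hq : q ∈ pureIcosians) :
    toD6 (p + q) = toD6 p + toD6 q := by
  obtain ⟨a, b, -, -, hp⟩ := exists_sqrt5_coords_of_mem_pureIcosians hp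
  obtain ⟨a', b', -, -, hq⟩ := exists_sqrt5_coords_of_mem_pureIcosians hq
  have hpq : coords (p + q) = fun i => ((a + a') i : ℝ) + ((b + b') i : ℝ) * √5 := by
    rw [coords_add, hp, hq]
    funext i
    simp only [Pi.add_apply]
    push_cast
    ring
  rw [toD6_of_coords hp, toD6_of_coords hq, toD6_of_coords hpq, d6Vec_add]
  funext k
  simp only [Pi.add_apply]
  push_cast
  rfl

lemma injOn_toD6_pureIcosians : Set.InjOn toD6 pureIcosians := by
  intro p hp q hq hpq
  obtain ⟨a, b, ha, hb, hp⟩ := exists_sqrt5_coords_of_mem_pureIcosians hp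
  obtain ⟨a', b', ha', hb', hq⟩ := exists_sqrt5_coords_of_mem_pureIcosians hq
  rw [toD6_of_coords hp, toD6_of_coords hq] at hpq
  have h : d6Vec a b = d6Vec a' b' := funext fun k => by exact_mod_cast congrFun hpq k
  obtain ⟨rfl, rfl⟩ := d6Vec_inj h (ha.trans ha'.symm) (hb.trans hb'.symm)
  exact coords_injective (hp.trans hq.symm)

lemma sum_sq_toD6 {q : ℍ[ℝ]} (hq : q ∈ pureIcosians) :
    ∑ k, toD6 q k ^ 2 = 2 * (csNorm q : ℝ) := by
  obtain ⟨a, b, ha, hb, hq⟩ := exists_sqrt5_coords_of_mem_pureIcosians hq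
  simp only [toD6_of_coords hq, csNorm_of_coords hq]
  exact_mod_cast sum_sq_d6Vec ha hb

lemma toD6_mem_D6 {q : ℍ[ℝ]} (hq : q ∈ pureIcosians) : toD6 q ∈ D6 := by
  obtain ⟨x, y, hxy, hx, hy, hq⟩ := exists_icosianCongr_of_mem_pureIcosians hq
  obtain ⟨-, h₁, h₂, h₃, h₄, h₅, h₆, h₇⟩ := hxy
  obtain ⟨n₀, hn₀⟩ : 4 ∣ x 1 + y 1 + 2 * y 3 := by omega
  obtain ⟨n₂, hn₂⟩ : 4 ∣ x 2 + y 2 + 2 * y 1 := by omega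
  obtain ⟨n₄, hn₄⟩ : 4 ∣ x 3 + y 3 - 2 * y 2 := by omega
  obtain ⟨m, hm⟩ : 2 ∣ y 1 - y 2 + y 3 := by omega
  have e₀ : (x 1 : ℝ) + y 1 + 2 * y 3 = 4 * n₀ := by exact_mod_cast hn₀
  have e₂ : (x 2 : ℝ) + y 2 + 2 * y 1 = 4 * n₂ := by exact_mod_cast hn₂
  have e₄ : (x 3 : ℝ) + y 3 - 2 * y 2 = 4 * n₄ := by exact_mod_cast hn₄
  have e : (y 1 : ℝ) - y 2 + y 3 = 2 * m := by exact_mod_cast hm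
  have h : toD6 q = fun k => ((![n₀, y 3 - n₀, n₂, y 1 - n₂, n₄, -n₄ - y 2] k : ℤ) : ℝ) := by
    rw [toD6_of_coords hq]
    funext k
    fin_cases k <;> simp only [d6Vec, Fin.zero_eta, Fin.mk_one, Fin.reduceFinMk,
      Matrix.cons_val_zero, Matrix.cons_val_one, Matrix.cons_val] <;> push_cast <;> linarith
  rw [h]
  refine ⟨fun k => ⟨_, rfl⟩, m, ?_⟩
  simp only [Fin.sum_univ_six, Matrix.cons_val_zero, Matrix.cons_val_one, Matrix.cons_val]
  push_cast
  linarith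

def pureIcosianSubgroup : AddSubgroup ℍ[ℝ] where
  carrier := pureIcosians
  add_mem' hp hq := ⟨add_mem hp.1 hq.1, by simp [hp.2, hq.2]⟩
  zero_mem' := ⟨zero_mem _, rfl⟩
  neg_mem' hq := ⟨neg_mem hq.1, by simp [hq.2]⟩

def toD6Hom : pureIcosianSubgroup →+ (Fin 6 → ℝ) :=
  AddMonoidHom.mk' (fun q => toD6 q) fun p q => toD6_add_of_mem_pureIcosians p.2 q.2

def d6SimpleRoot : Fin 6 → Fin 6 → ℝ :=
  ![![1, -1, 0, 0, 0, 0], ![0, 1, -1, 0, 0, 0], ![0, 0, 1, -1, 0, 0],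
    ![0, 0, 0, 1, -1, 0], ![0, 0, 0, 0, 1, -1], ![0, 0, 0, 0, 1, 1]]

lemma D6_subset_closure_d6SimpleRoot : D6 ⊆ AddSubgroup.closure (Set.range d6SimpleRoot) := by
  rintro d ⟨hd, m, hsum⟩
  choose z hz using hd
  have hz' : z 0 + z 1 + z 2 + z 3 + z 4 + z 5 = (2 * m : ℝ) := by
    simpa [Fin.sum_univ_six, hz] using hsum
  have hcomb : d = ∑ k, (![z 0, z 0 + z 1, z 0 + z 1 + z 2, z 0 + z 1 + z 2 + z 3, m - z 5, m] k) •
      d6SimpleRoot k := by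
    funext i
    fin_cases i <;> simp only [Fin.sum_univ_six, Finset.sum_apply, zsmul_eq_mul, Pi.mul_apply,
      Pi.intCast_apply, d6SimpleRoot, hz, Fin.zero_eta, Fin.mk_one, Fin.reduceFinMk,
      Matrix.cons_val_zero, Matrix.cons_val_one, Matrix.cons_val] <;> push_cast <;> linarith
  rw [hcomb]
  exact sum_mem fun k _ => zsmul_mem (AddSubgroup.subset_closure (Set.mem_range_self k)) _

lemma unit_mem_baseVectors : ![(1 : ℝ), 0, 0, 0] ∈ baseVectors :=
  Or.inl ⟨1, Or.inl rfl, rfl⟩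

lemma golden_mem_baseVectors {s₁ s₂ s₃ : ℚ} (h₁ : s₁ = 1 ∨ s₁ = -1) (h₂ : s₂ = 1 ∨ s₂ = -1)
    (h₃ : s₃ = 1 ∨ s₃ = -1) : ![0, (s₁ : ℝ) / 2, s₂ * φ / 2, s₃ * Φ / 2] ∈ baseVectors := by
  have hsign : ∀ s : ℚ, s = 1 ∨ s = -1 → IsSign (s : ℝ) := by
    rintro s (rfl | rfl)
    exacts [Or.inl Rat.cast_one, Or.inr (by norm_num)]
  exact Or.inr (Or.inr ⟨_, _, _, hsign _ h₁, hsign _ h₂, hsign _ h₃, rfl⟩)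

lemma unit_eq_sqrt5 :
    ![(1 : ℝ), 0, 0, 0] =
      fun i => ((![1, 0, 0, 0] : Fin 4 → ℚ) i : ℝ) + ((0 : Fin 4 → ℚ) i) * √5 := by
  funext i; fin_cases i <;> simp

lemma golden_eq_sqrt5 (s₁ s₂ s₃ : ℚ) :
    ![0, (s₁ : ℝ) / 2, s₂ * φ / 2, s₃ * Φ / 2] = fun i =>
      ((![0, s₁ / 2, -s₂ / 4, s₃ / 4] : Fin 4 → ℚ) i : ℝ) +
        ((![0, 0, s₂ / 4, s₃ / 4] : Fin 4 → ℚ) i) * √5 := by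
  funext i
  fin_cases i <;> simp only [φ, Φ, Fin.zero_eta, Fin.mk_one, Fin.reduceFinMk,
    Matrix.cons_val_zero, Matrix.cons_val_one, Matrix.cons_val, Rat.cast_zero, Rat.cast_div,
    Rat.cast_neg, Rat.cast_ofNat] <;> ring

lemma d6Vec_comp_mem_range {v : Fin 4 → ℝ} (hv : v ∈ baseVectors) {a b : Fin 4 → ℚ}
    (hab : v = fun i => a i + b i * √5) (σ : Equiv.Perm (Fin 4)) (hσ : Equiv.Perm.sign σ = 1)
    (h₀ : v (σ 0) = 0) : (fun k => (d6Vec (a ∘ σ) (b ∘ σ) k : ℝ)) ∈ toD6Hom.range := by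
  let q : ℍ[ℝ] := ⟨v (σ 0), v (σ 1), v (σ 2), v (σ 3)⟩
  have hq : coords q = v ∘ σ := by funext i; fin_cases i <;> rfl
  have hq' : q ∈ pureIcosians := ⟨AddSubgroup.subset_closure ⟨v, hv, σ, hσ, hq⟩, h₀⟩
  exact ⟨⟨q, hq'⟩, toD6_of_coords (hq.trans (by rw [hab]; rfl))⟩

lemma d6SimpleRoot_mem_range (k : Fin 6) : d6SimpleRoot k ∈ toD6Hom.range := by
  have pos : (1 : ℚ) = 1 ∨ (1 : ℚ) = -1 := Or.inl rfl
  have neg : (-1 : ℚ) = 1 ∨ (-1 : ℚ) = -1 := Or.inr rfl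
  have unit := d6Vec_comp_mem_range unit_mem_baseVectors unit_eq_sqrt5
  have golden := fun {s₁ s₂ s₃ : ℚ} h₁ h₂ h₃ =>
    d6Vec_comp_mem_range (golden_mem_baseVectors h₁ h₂ h₃) (golden_eq_sqrt5 s₁ s₂ s₃)
  fin_cases k
  · convert unit (Equiv.swap 0 1 * Equiv.swap 2 3) (by decide) rfl using 1
    funext j; fin_cases j <;> simp [d6Vec, d6SimpleRoot, Equiv.swap_apply_def]
  · convert golden neg pos neg (Equiv.swap 1 2 * Equiv.swap 1 3) (by decide) rfl using 1
    funext j; fin_cases j <;> simp [d6Vec, d6SimpleRoot, Equiv.swap_apply_def] <;> norm_num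
  · convert unit (Equiv.swap 0 2 * Equiv.swap 1 3) (by decide) rfl using 1
    funext j; fin_cases j <;> simp [d6Vec, d6SimpleRoot, Equiv.swap_apply_def]
  · convert add_mem (golden neg pos neg 1 (by decide) rfl)
      (golden neg pos pos (Equiv.swap 1 2 * Equiv.swap 1 3) (by decide) rfl) using 1
    funext j; fin_cases j <;> simp [d6Vec, d6SimpleRoot, Equiv.swap_apply_def] <;> norm_num
  · convert unit (Equiv.swap 0 3 * Equiv.swap 1 2) (by decide) rfl using 1
    funext j; fin_cases j <;> simp [d6Vec, d6SimpleRoot, Equiv.swap_apply_def]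
  · convert add_mem (golden pos neg pos 1 (by decide) rfl)
      (golden neg neg neg 1 (by decide) rfl) using 1
    funext j; fin_cases j <;> simp [d6Vec, d6SimpleRoot] <;> norm_num

lemma D6_subset_image_toD6 : D6 ⊆ toD6 '' pureIcosians := by
  intro d hd
  obtain ⟨⟨q, hq⟩, rfl⟩ := (AddSubgroup.closure_le _).mpr
    (Set.range_subset_iff.mpr d6SimpleRoot_mem_range) (D6_subset_closure_d6SimpleRoot hd)
  exact ⟨q, hq, rfl⟩

lemma toD6_image_pureIcosians : toD6 '' pureIcosians = D6 :=
  (Set.image_subset_iff.mpr fun _ => toD6_mem_D6).antisymm D6_subset_image_toD6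

theorem stmt14 :
    ∃ g : ℍ[ℝ] → (Fin 6 → ℝ),
      (∀ p ∈ pureIcosians, ∀ q ∈ pureIcosians, g (p + q) = g p + g q) ∧
      Set.InjOn g pureIcosians ∧
      g '' pureIcosians = D6 ∧
      ∀ q ∈ pureIcosians, ∑ i, g q i ^ 2 = 2 * (csNorm q : ℝ) :=
  ⟨toD6, fun _ hp _ hq => toD6_add_of_mem_pureIcosians hp hq, injOn_toD6_pureIcosians,
    toD6_image_pureIcosians, fun _ => sum_sq_toD6⟩
end
end
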